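/- A collection of labeled ABox examples E = (E⁺, E⁻) admits an ALC-ontology O such that every ABox in E⁺ is consistent with O and every ABox in E⁻ is inconsistent with O if and only if it admits such an ALCI-ontology. -/

import Mathlib

/-!
Formalization background for "Fitting Ontologies to ABox-Query Examples":
description logics ALC / ALCI / ALCQ, ABoxes, interpretations (with standard
names assumption), ontologies, queries (AQ / CQ / full CQ / UCQ), fitting
problems, homomorphisms, forest models, unravelings, etc.
-/

namespace DLFit

/-- Roles: role names and inverse roles (both indexed by natural numbers). -/
inductive DLRole : Type
  | name (r : ℕ)
  | inv (r : ℕ)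
deriving DecidableEq

/-- Concepts of ALCIQ, a common superlanguage of ALC, ALCI and ALCQ. -/
inductive Concept : Type
  | top
  | atom (A : ℕ)
  | neg (C : Concept)
  | inter (C D : Concept)
  | ex (r : DLRole) (C : Concept)
  | atLeast (n : ℕ) (r : DLRole) (C : Concept)
  | atMost (n : ℕ) (r : DLRole) (C : Concept)
deriving DecidableEq

/-- A concept uses no inverse roles. -/
def Concept.invFree : Concept → Prop
  | .top => True
  | .atom _ => True
  | .neg C => C.invFree
  | .inter C D => C.invFree ∧ D.invFree
  | .ex r C => (∃ m, r = DLRole.name m) ∧ C.invFree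
  | .atLeast _ r C => (∃ m, r = DLRole.name m) ∧ C.invFree
  | .atMost _ r C => (∃ m, r = DLRole.name m) ∧ C.invFree

/-- A concept uses no qualified number restrictions. -/
def Concept.countFree : Concept → Prop
  | .top => True
  | .atom _ => True
  | .neg C => C.countFree
  | .inter C D => C.countFree ∧ D.countFree
  | .ex _ C => C.countFree
  | .atLeast _ _ _ => False
  | .atMost _ _ _ => False

/-- An ontology is a finite set of concept inclusions `C ⊑ D`. -/
abbrev Ontology := Finset (Concept × Concept)

/-- The two ontology languages considered: ALC and ALCI. -/
inductive DL : Type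
  | alc
  | alci
deriving DecidableEq

/-- Membership of an ontology in ALC resp. ALCI. -/
def OntologyInLang : DL → Ontology → Prop
  | .alc, O => ∀ ci ∈ O, ci.1.invFree ∧ ci.1.countFree ∧ ci.2.invFree ∧ ci.2.countFree
  | .alci, O => ∀ ci ∈ O, ci.1.countFree ∧ ci.2.countFree

/-- An ALCQ-ontology: no inverse roles (number restrictions allowed). -/
def OntologyIsALCQ (O : Ontology) : Prop := ∀ ci ∈ O, ci.1.invFree ∧ ci.2.invFree

/-- ABox assertions `A(a)` and `r(a,b)`. -/
inductive Assertion : Type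
  | conc (A : ℕ) (a : ℕ)
  | role (r : ℕ) (a b : ℕ)
deriving DecidableEq

/-- An ABox is a finite set of assertions. -/
abbrev ABox := Finset Assertion

def AssertionInds : Assertion → Finset ℕ
  | .conc _ a => {a}
  | .role _ a b => {a, b}

/-- The individual names occurring in an ABox. -/
def ABoxInds (A : ABox) : Finset ℕ := A.biUnion AssertionInds

def AssertionCNs : Assertion → Finset ℕ
  | .conc P _ => {P}
  | .role _ _ _ => ∅

/-- The concept names occurring in an ABox. -/
def ABoxCNs (A : ABox) : Finset ℕ := A.biUnion AssertionCNs

/-- An interpretation, with the standard names assumption: every individual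
name denotes itself, i.e. the (injective) map `indI` embeds the individual
names into the domain. -/
structure Interp : Type 1 where
  Dom : Type
  indI : ℕ → Dom
  indI_inj : Function.Injective indI
  concI : ℕ → Set Dom
  roleI : ℕ → Set (Dom × Dom)

/-- Semantics of (possibly inverse) roles. -/
def Interp.rSem (I : Interp) : DLRole → Set (I.Dom × I.Dom)
  | .name r => I.roleI r
  | .inv r => {p | (p.2, p.1) ∈ I.roleI r}

/-- Semantics of concepts. -/
def Interp.cSem (I : Interp) : Concept → Set I.Dom
  | .top => Set.univ
  | .atom A => I.concI A
  | .neg C => (I.cSem C)ᶜ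
  | .inter C D => I.cSem C ∩ I.cSem D
  | .ex r C => {d | ∃ e, (d, e) ∈ I.rSem r ∧ e ∈ I.cSem C}
  | .atLeast n r C => {d | (n : ℕ∞) ≤ {e | (d, e) ∈ I.rSem r ∧ e ∈ I.cSem C}.encard}
  | .atMost n r C => {d | {e | (d, e) ∈ I.rSem r ∧ e ∈ I.cSem C}.encard ≤ (n : ℕ∞)}

/-- `I` is a model of the ontology `O`. -/
def Interp.IsModelOf (I : Interp) (O : Ontology) : Prop :=
  ∀ ci ∈ O, I.cSem ci.1 ⊆ I.cSem ci.2

def Interp.SatAssertion (I : Interp) : Assertion → Prop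
  | .conc P a => I.indI a ∈ I.concI P
  | .role r a b => (I.indI a, I.indI b) ∈ I.roleI r

/-- `I` is a model of the ABox `A` (individual names interpreted as themselves). -/
def Interp.SatABox (I : Interp) (A : ABox) : Prop := ∀ α ∈ A, I.SatAssertion α

/-- An ABox is consistent with an ontology if they have a common model. -/
def ConsistentWith (A : ABox) (O : Ontology) : Prop :=
  ∃ I : Interp, I.IsModelOf O ∧ I.SatABox A

/-- Homomorphism between ABoxes (need not fix individual names). -/
def ABoxHom (h : ℕ → ℕ) (A B : ABox) : Prop :=
  (∀ P a, Assertion.conc P a ∈ A → Assertion.conc P (h a) ∈ B) ∧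
  (∀ r a b, Assertion.role r a b ∈ A → Assertion.role r (h a) (h b) ∈ B)

/-- Homomorphism from an ABox into an interpretation. -/
def ABoxIHom (I : Interp) (h : ℕ → I.Dom) (A : ABox) : Prop :=
  (∀ P a, Assertion.conc P a ∈ A → h a ∈ I.concI P) ∧
  (∀ r a b, Assertion.role r a b ∈ A → (h a, h b) ∈ I.roleI r)

/-- Local injectivity of a homomorphism on an ABox. -/
def LocInj {D : Type} (h : ℕ → D) (A : ABox) : Prop :=
  ∀ r a b c, Assertion.role r a b ∈ A → Assertion.role r a c ∈ A → h b = h c → b = c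

/-- The ABoxes in a collection of examples have pairwise disjoint individual names. -/
def PairwiseDisjInds (S : Finset ABox) : Prop :=
  ∀ A ∈ S, ∀ B ∈ S, A ≠ B → Disjoint (ABoxInds A) (ABoxInds B)

/-! ## Queries -/

/-- Terms of a query: variables and individual names. -/
inductive Term : Type
  | var (x : ℕ)
  | ind (a : ℕ)
deriving DecidableEq

/-- Atoms of a query. -/
inductive Atom : Type
  | catom (A : ℕ) (t : Term)
  | ratom (r : ℕ) (t t' : Term)
deriving DecidableEq

/-- A (Boolean) conjunctive query, viewed as its finite set of atoms;
all variables are (implicitly) existentially quantified. -/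
abbrev CQ := Finset Atom

/-- A union of conjunctive queries. -/
abbrev UCQ := Finset CQ

def TermInds : Term → Finset ℕ
  | .var _ => ∅
  | .ind a => {a}

def AtomInds : Atom → Finset ℕ
  | .catom _ t => TermInds t
  | .ratom _ t t' => TermInds t ∪ TermInds t'

/-- Individual names occurring in a CQ. -/
def CQInds (q : CQ) : Finset ℕ := q.biUnion AtomInds

def UCQInds (q : UCQ) : Finset ℕ := q.biUnion CQInds

def AtomCNs : Atom → Finset ℕ
  | .catom P _ => {P}
  | .ratom _ _ _ => ∅

/-- Concept names occurring in a CQ. -/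
def CQCNs (q : CQ) : Finset ℕ := q.biUnion AtomCNs

def UCQCNs (q : UCQ) : Finset ℕ := q.biUnion CQCNs

def AtomGround : Atom → Prop
  | .catom _ t => ∃ a, t = Term.ind a
  | .ratom _ t t' => (∃ a, t = Term.ind a) ∧ (∃ a, t' = Term.ind a)

/-- A full CQ: no (existentially quantified) variables. -/
def CQIsFull (q : CQ) : Prop := ∀ α ∈ q, AtomGround α

def TermEval (I : Interp) (v : ℕ → I.Dom) : Term → I.Dom
  | .var x => v x
  | .ind a => I.indI a

def Interp.SatAtom (I : Interp) (v : ℕ → I.Dom) : Atom → Prop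
  | .catom P t => TermEval I v t ∈ I.concI P
  | .ratom r t t' => (TermEval I v t, TermEval I v t') ∈ I.roleI r

/-- `I ⊨ q` for a CQ `q`: there is a (strong) homomorphism of the atoms of `q`
into `I` that is the identity on individual names. -/
def Interp.SatCQ (I : Interp) (q : CQ) : Prop :=
  ∃ v : ℕ → I.Dom, ∀ α ∈ q, I.SatAtom v α

/-- `I ⊨ q` for a UCQ `q`: some disjunct is satisfied. -/
def Interp.SatUCQ (I : Interp) (q : UCQ) : Prop := ∃ p ∈ q, I.SatCQ p

/-- `A ∪ O ⊨ Q(a)` for an atomic query. -/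
def EntailsAQ (A : ABox) (O : Ontology) (Q a : ℕ) : Prop :=
  ∀ I : Interp, I.IsModelOf O → I.SatABox A → I.indI a ∈ I.concI Q

/-- `A ∪ O ⊨ q` for a CQ. -/
def EntailsCQ (A : ABox) (O : Ontology) (q : CQ) : Prop :=
  ∀ I : Interp, I.IsModelOf O → I.SatABox A → I.SatCQ q

/-- `A ∪ O ⊨ q` for a UCQ. -/
def EntailsUCQ (A : ABox) (O : Ontology) (q : UCQ) : Prop :=
  ∀ I : Interp, I.IsModelOf O → I.SatABox A → I.SatUCQ q

/-! ## Examples and fitting -/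

/-- An ABox-AQ example `(𝒜, Q(a))`. -/
abbrev AQEx := ABox × ℕ × ℕ

/-- An ABox-CQ (in particular, ABox-FullCQ) example `(𝒜, q)`. -/
abbrev CQEx := ABox × CQ

/-- An ABox-UCQ example `(𝒜, q)`. -/
abbrev UEx := ABox × UCQ

/-- `O` fits a collection of labeled ABox(-consistency) examples. -/
def FitsCons (O : Ontology) (Ep En : Finset ABox) : Prop :=
  (∀ A ∈ Ep, ConsistentWith A O) ∧ (∀ A ∈ En, ¬ ConsistentWith A O)

/-- `O` fits a collection of labeled ABox-AQ examples. -/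
def FitsAQ (O : Ontology) (Ep En : Finset AQEx) : Prop :=
  (∀ e ∈ Ep, EntailsAQ e.1 O e.2.1 e.2.2) ∧ (∀ e ∈ En, ¬ EntailsAQ e.1 O e.2.1 e.2.2)

/-- `O` fits a collection of labeled ABox-CQ examples. -/
def FitsCQ (O : Ontology) (Ep En : Finset CQEx) : Prop :=
  (∀ e ∈ Ep, EntailsCQ e.1 O e.2) ∧ (∀ e ∈ En, ¬ EntailsCQ e.1 O e.2)

/-- `O` fits a collection of labeled ABox-UCQ examples. -/
def FitsUCQ (O : Ontology) (Ep En : Finset UEx) : Prop :=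
  (∀ e ∈ Ep, EntailsUCQ e.1 O e.2) ∧ (∀ e ∈ En, ¬ EntailsUCQ e.1 O e.2)

/-- An example `(A, q)` is inconsistent if every ALCI-ontology `O` with
`A ∪ O ⊨ q` is inconsistent with `A`. -/
def InconsistentEx (A : ABox) (q : CQ) : Prop :=
  ∀ O : Ontology, OntologyInLang DL.alci O → EntailsCQ A O q → ¬ ConsistentWith A O

/-! ## Completions and refutation candidates -/

/-- The disjoint union `A⁻` of the ABoxes of the negative AQ examples
(the ABoxes of a collection have pairwise disjoint individual names, so the
disjoint union is the plain union). -/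
def NegUnionAQ (En : Finset AQEx) : ABox := En.sup Prod.fst

/-- The disjoint union `A⁻` of the ABoxes of the negative CQ examples. -/
def NegUnionCQ (En : Finset CQEx) : ABox := En.sup Prod.fst

/-- A completion for a collection of ABox-AQ examples: extends `A⁻` by concept
assertions `Q(b)` with `b ∈ ind(A⁻)` and `Q` occurring as an AQ in `E⁺`. -/
def IsCompletionAQ (Ep En : Finset AQEx) (C : ABox) : Prop :=
  NegUnionAQ En ⊆ C ∧
  ∀ α ∈ C, α ∈ NegUnionAQ En ∨
    ∃ Q b, α = Assertion.conc Q b ∧ b ∈ ABoxInds (NegUnionAQ En) ∧ ∃ e ∈ Ep, e.2.1 = Q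

/-- Refutation candidates for a collection of ABox-AQ examples. -/
inductive RefCandAQ (Ep : Finset AQEx) (base : ABox) : ABox → Prop
  | base : RefCandAQ Ep base base
  | step {C : ABox} {A : ABox} {Q a : ℕ} {h : ℕ → ℕ} :
      RefCandAQ Ep base C → (A, Q, a) ∈ Ep → ABoxHom h A C →
      RefCandAQ Ep base (insert (Assertion.conc Q (h a)) C)

/-- A completion for a collection of ABox-FullCQ examples: extends `A⁻` by
concept assertions `Q(b)` with `b ∈ ind(A⁻)` and `Q` occurring in a query of a
positive example. -/
def IsCompletionCQ (Ep En : Finset CQEx) (C : ABox) : Prop :=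
  NegUnionCQ En ⊆ C ∧
  ∀ α ∈ C, α ∈ NegUnionCQ En ∨
    ∃ Q b, α = Assertion.conc Q b ∧ b ∈ ABoxInds (NegUnionCQ En) ∧ ∃ e ∈ Ep, Q ∈ CQCNs e.2

/-- Refutation candidates for a collection of ABox-FullCQ examples. -/
inductive RefCandCQ (Ep : Finset CQEx) (base : ABox) : ABox → Prop
  | base : RefCandCQ Ep base base
  | step {C : ABox} {A : ABox} {q : CQ} {Q a : ℕ} {h : ℕ → ℕ} :
      RefCandCQ Ep base C → (A, q) ∈ Ep → ¬ InconsistentEx A q → ABoxHom h A C →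
      Atom.catom Q (Term.ind a) ∈ q →
      RefCandCQ Ep base (insert (Assertion.conc Q (h a)) C)

/-! ## Forest models, unravelings and `I_{A,h,L}` -/

/-- The edge relation of the graph of a forest model: some role edge, excluding
pairs of ABox individuals. -/
def ForestEdge (I : Interp) (A : ABox) (d e : I.Dom) : Prop :=
  (∃ r, (d, e) ∈ I.roleI r) ∧
  ¬ ∃ a ∈ ABoxInds A, ∃ b ∈ ABoxInds A, d = I.indI a ∧ e = I.indI b

/-- The undirected version of the graph of a forest model. -/
def ForestGraph (I : Interp) (A : ABox) : SimpleGraph I.Dom where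
  Adj d e := d ≠ e ∧ (ForestEdge I A d e ∨ ForestEdge I A e d)
  symm := ⟨fun _ _ h => ⟨h.1.symm, h.2.symm⟩⟩
  loopless := ⟨fun _ h => h.1 rfl⟩

/-- `I` is an `L`-forest model of the ABox `A`:
it is a model of `A`; role edges among ABox individuals are exactly those
asserted in `A`; and the remaining role edges form a forest (for ALC a
directed forest whose edges point away from the roots, for ALCI an
undirected forest). -/
def IsForestModel (L : DL) (I : Interp) (A : ABox) : Prop :=
  I.SatABox A ∧
  (∀ r a b, a ∈ ABoxInds A → b ∈ ABoxInds A →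
    ((I.indI a, I.indI b) ∈ I.roleI r ↔ Assertion.role r a b ∈ A)) ∧
  (match L with
    | DL.alc =>
        (∀ e : I.Dom, {d : I.Dom | ForestEdge I A d e}.Subsingleton) ∧
        WellFounded (fun d e : I.Dom => ForestEdge I A d e)
    | DL.alci =>
        (∀ d : I.Dom, ¬ ForestEdge I A d d) ∧ (ForestGraph I A).IsAcyclic)

/-- `e` is a neighbor of `d` in `I`. -/
def Neighbor (I : Interp) (d e : I.Dom) : Prop :=
  ∃ r, (d, e) ∈ I.roleI r ∨ (e, d) ∈ I.roleI r

/-- The degree of `I` (maximal number of neighbors) is at most `n`. -/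
def DegreeLE (I : Interp) (n : ℕ) : Prop :=
  ∀ d : I.Dom, ∃ s : Finset I.Dom, s.card ≤ n ∧ ∀ e : I.Dom, Neighbor I d e → e ∈ s

/-- The disjoint union of a family of interpretations (`pick` chooses, for
every individual name, the component interpreting it). -/
def Interp.disjUnion {ι : Type} (J : ι → Interp) (pick : ℕ → ι) : Interp where
  Dom := Σ i : ι, (J i).Dom
  indI := fun n => ⟨pick n, (J (pick n)).indI n⟩
  indI_inj := by
    intro m n hmn
    obtain ⟨h1, h2⟩ := Sigma.ext_iff.mp hmn
    dsimp only at h1 h2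
    rw [h1] at h2
    exact (J (pick n)).indI_inj (eq_of_heq h2)
  concI := fun P => {x | x.2 ∈ (J x.1).concI P}
  roleI := fun r => {p | ∃ (i : ι) (d e : (J i).Dom),
    p = (⟨i, d⟩, ⟨i, e⟩) ∧ (d, e) ∈ (J i).roleI r}

/-- `l` is a path in `I` starting at `d` (for `L = ALC`, only role names may
occur on the path; for `L = ALCI` also inverse roles). -/
def IsPathFrom (L : DL) (I : Interp) : I.Dom → List (DLRole × I.Dom) → Prop
  | _, [] => True
  | d, (r, e) :: l =>
      (d, e) ∈ I.rSem r ∧ (L = DL.alc → ∃ m, r = DLRole.name m) ∧ IsPathFrom L I e l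

/-- The tail (last element) of a path starting at `d`. -/
def PathTail (I : Interp) (d : I.Dom) (l : List (DLRole × I.Dom)) : I.Dom :=
  (l.getLast?).elim d Prod.snd

/-- Domain of `I_{A,h,L}`: individual names plus, for every individual name,
paths in `I` (elements not corresponding to `ind(A)` or to valid nonempty
paths are unlabeled and isolated junk). -/
abbrev IAhDom (I : Interp) : Type := ℕ ⊕ (ℕ × List (DLRole × I.Dom))

/-- The element of `I_{A,h,L}` given by the path `l` attached at individual
`a`; the root (empty path) is identified with `a` itself. -/
def IAhNode (I : Interp) (a : ℕ) : List (DLRole × I.Dom) → IAhDom I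
  | [] => Sum.inl a
  | l => Sum.inr (a, l)

/-- Validity of a path attached at `a` in `I_{A,h,L}`. -/
def IAhValid (L : DL) (I : Interp) (A : ABox) (h : ℕ → I.Dom)
    (a : ℕ) (l : List (DLRole × I.Dom)) : Prop :=
  a ∈ ABoxInds A ∧ IsPathFrom L I (h a) l

/-- The interpretation `I_{A,h,L}`: start from the interpretation with domain
`ind(A)`, concept memberships induced from `I` via `h`, and role edges exactly
the role assertions of `A`; then disjointly attach, for every `a ∈ ind(A)`,
the `L`-unraveling of `I` at `h(a)`, identifying its root with `a`. -/
def IAh (L : DL) (I : Interp) (A : ABox) (h : ℕ → I.Dom) : Interp where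
  Dom := IAhDom I
  indI := Sum.inl
  indI_inj := Sum.inl_injective
  concI := fun P => {x : IAhDom I |
    (∃ a, x = Sum.inl a ∧ a ∈ ABoxInds A ∧ h a ∈ I.concI P) ∨
    (∃ a l, x = Sum.inr (a, l) ∧ l ≠ [] ∧ IAhValid L I A h a l ∧
      PathTail I (h a) l ∈ I.concI P)}
  roleI := fun r => {p : IAhDom I × IAhDom I |
    (∃ a b, p.1 = Sum.inl a ∧ p.2 = Sum.inl b ∧ Assertion.role r a b ∈ A) ∨
    (∃ a l e, IAhValid L I A h a (l ++ [(DLRole.name r, e)]) ∧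
      p.1 = IAhNode I a l ∧ p.2 = IAhNode I a (l ++ [(DLRole.name r, e)])) ∨
    (∃ a l e, IAhValid L I A h a (l ++ [(DLRole.inv r, e)]) ∧
      p.1 = IAhNode I a (l ++ [(DLRole.inv r, e)]) ∧ p.2 = IAhNode I a l)}

/-- Restriction of an interpretation to the elements satisfying `P`
(elements outside `P` become unlabeled and isolated). -/
def Interp.restrictP (I : Interp) (P : I.Dom → Prop) : Interp where
  Dom := I.Dom
  indI := I.indI
  indI_inj := I.indI_inj
  concI := fun Q => {d | d ∈ I.concI Q ∧ P d}
  roleI := fun r => {p | p ∈ I.roleI r ∧ P p.1 ∧ P p.2}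

/-- Depth of elements of `I_{A,h,L}` (ABox individuals have depth 0). -/
def IAhDepthLE (I : Interp) (n : ℕ) : IAhDom I → Prop
  | Sum.inl _ => True
  | Sum.inr al => al.2.length ≤ n

/-! ## Sizes -/

/-- Size of a UCQ (number of atoms). -/
def UCQSize (q : UCQ) : ℕ := q.sum Finset.card

/-- Size of an ABox-UCQ example. -/
def UExSize (e : UEx) : ℕ := e.1.card + UCQSize e.2

/-- Size `||E||` of a collection of ABox-UCQ examples. -/
def ESize (Ep En : Finset UEx) : ℕ := Ep.sum UExSize + En.sum UExSize

/-- The (exponential) bound `bound(E)` on the degree: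
`||E⁻||` plus the sum over positive examples `(A,q)` of `(||(A,q)||+1)^{||q||}`. -/
def EBound (Ep En : Finset UEx) : ℕ :=
  En.sum UExSize + Ep.sum (fun e => (UExSize e + 1) ^ UCQSize e.2)

/-! ## Connectivity, components, variations -/

def ABoxAdj (A : ABox) (a b : ℕ) : Prop :=
  ∃ r, Assertion.role r a b ∈ A ∨ Assertion.role r b a ∈ A

/-- Connectivity of individuals in an ABox. -/
def ABoxConn (A : ABox) : ℕ → ℕ → Prop := Relation.ReflTransGen (ABoxAdj A)

/-- `B` is a maximally connected component of the ABox `A`. -/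
def IsComponent (B A : ABox) : Prop :=
  ∃ a ∈ ABoxInds A, ∀ α : Assertion,
    α ∈ B ↔ α ∈ A ∧ ∀ c ∈ AssertionInds α, ABoxConn A a c

def AtomTerms : Atom → Finset Term
  | .catom _ t => {t}
  | .ratom _ t t' => {t, t'}

/-- The terms (variables and individuals) occurring in a CQ. -/
def CQTerms (q : CQ) : Finset Term := q.biUnion AtomTerms

def CQAdj (q : CQ) (t t' : Term) : Prop :=
  ∃ r, Atom.ratom r t t' ∈ q ∨ Atom.ratom r t' t ∈ q

/-- A CQ is connected. -/
def CQConnected (q : CQ) : Prop :=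
  ∀ t ∈ CQTerms q, ∀ t' ∈ CQTerms q, Relation.ReflTransGen (CQAdj q) t t'

def SubstTerm (σ : ℕ → Term) : Term → Term
  | .var x => σ x
  | .ind a => Term.ind a

def SubstAtom (σ : ℕ → Term) : Atom → Atom
  | .catom P t => Atom.catom P (SubstTerm σ t)
  | .ratom r t t' => Atom.ratom r (SubstTerm σ t) (SubstTerm σ t')

/-- An `A`-variation of a CQ `p`: consistently replace zero or more variables by
individual names from `ind(A)` and possibly identify variables. -/
def IsVariation (A : ABox) (p p' : CQ) : Prop :=
  ∃ σ : ℕ → Term,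
    (∀ x : ℕ, (∃ y, σ x = Term.var y) ∨ ∃ a ∈ ABoxInds A, σ x = Term.ind a) ∧
    p' = p.image (SubstAtom σ)

def Assertion.toAtom : Assertion → Atom
  | .conc P a => Atom.catom P (Term.ind a)
  | .role r a b => Atom.ratom r (Term.ind a) (Term.ind b)

/-- The interpretation `I_q` induced by a CQ. -/
def CQInterp (p : CQ) : Interp where
  Dom := Term
  indI := Term.ind
  indI_inj := fun _ _ hab => Term.ind.inj hab
  concI := fun P => {t | Atom.catom P t ∈ p}
  roleI := fun r => {tt | Atom.ratom r tt.1 tt.2 ∈ p}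

/-- A proper `A`-variation. -/
def IsProperVariation (L : DL) (A : ABox) (p p' : CQ) : Prop :=
  IsVariation A p p' ∧
  (∀ r a b, Atom.ratom r (Term.ind a) (Term.ind b) ∈ p' → Assertion.role r a b ∈ A) ∧
  IsForestModel L (CQInterp p') (A.filter fun α => α.toAtom ∈ p')

/-- A weak homomorphism from a CQ into an interpretation (need not be the
identity on individual names). -/
def WeakHom (I : Interp) (g : Term → I.Dom) (p : CQ) : Prop :=
  (∀ P t, Atom.catom P t ∈ p → g t ∈ I.concI P) ∧
  (∀ r t t', Atom.ratom r t t' ∈ p → (g t, g t') ∈ I.roleI r)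

def ReachStep (L : DL) (I : Interp) (d e : I.Dom) : Prop :=
  match L with
  | DL.alc => ∃ r, (d, e) ∈ I.roleI r
  | DL.alci => ∃ r, (d, e) ∈ I.roleI r ∨ (e, d) ∈ I.roleI r

/-- `L`-reachability in an interpretation. -/
def Reach (L : DL) (I : Interp) : I.Dom → I.Dom → Prop :=
  Relation.ReflTransGen (ReachStep L I)

/-- Compatibility of a weak homomorphism `g` (from `p'` to `I`) with a
homomorphism `h` (from `A` to `I`). -/
def CompatibleWith (L : DL) (I : Interp) (A : ABox) (h : ℕ → I.Dom)
    (p' : CQ) (g : Term → I.Dom) : Prop :=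
  (∀ a ∈ CQInds p', g (Term.ind a) = h a) ∧
  (∀ x : ℕ, Term.var x ∈ CQTerms p' →
    ∃ a ∈ ABoxInds A, Reach L I (h a) (g (Term.var x)))

/-- Query classes. -/
inductive QClass : Type
  | aq
  | fullcq
  | cq
  | ucq

/-- A UCQ belongs to a query class. -/
def UCQInClass : QClass → UCQ → Prop
  | .aq, q => ∃ Q a, q = {({Atom.catom Q (Term.ind a)} : CQ)}
  | .fullcq, q => ∃ p : CQ, q = {p} ∧ CQIsFull p
  | .cq, q => ∃ p : CQ, q = {p}
  | .ucq, _ => True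

/-! The direction from ALC to ALCI is inclusion. Conversely, let `O` be a fitting ALCI-ontology;
without positive examples `⊤ ⊑ ⊥` fits. Otherwise ALCI-concepts are invariant under disjoint
unions, so the disjoint union of models of the positive examples shows that their union `B` is
consistent with `O`. ALCI-consistency is reflected along homomorphisms into models (glue the
individuals onto their images), so no negative example maps homomorphically into `B`. Finally the
ALC-ontology `charOntology B` colours every element by an individual of `B` and forbids every
coloured pattern not present in `B`; over a fixed signature its consistent ABoxes are exactly
those that map homomorphically into `B`. -/

open Function

def AssertionRNs : Assertion → Finset ℕ
  | .conc _ _ => ∅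
  | .role r _ _ => {r}

def ABoxRNs (A : ABox) : Finset ℕ := A.biUnion AssertionRNs

lemma mem_ABoxInds_of_conc {A : ABox} {P a : ℕ} (h : Assertion.conc P a ∈ A) :
    a ∈ ABoxInds A :=
  Finset.mem_biUnion.mpr ⟨_, h, by simp [AssertionInds]⟩

lemma mem_ABoxInds_of_role_left {A : ABox} {r a b : ℕ} (h : Assertion.role r a b ∈ A) :
    a ∈ ABoxInds A :=
  Finset.mem_biUnion.mpr ⟨_, h, by simp [AssertionInds]⟩

lemma mem_ABoxInds_of_role_right {A : ABox} {r a b : ℕ} (h : Assertion.role r a b ∈ A) :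
    b ∈ ABoxInds A :=
  Finset.mem_biUnion.mpr ⟨_, h, by simp [AssertionInds]⟩

lemma mem_ABoxCNs_of_conc {A : ABox} {P a : ℕ} (h : Assertion.conc P a ∈ A) :
    P ∈ ABoxCNs A :=
  Finset.mem_biUnion.mpr ⟨_, h, by simp [AssertionCNs]⟩

lemma mem_ABoxRNs_of_role {A : ABox} {r a b : ℕ} (h : Assertion.role r a b ∈ A) :
    r ∈ ABoxRNs A :=
  Finset.mem_biUnion.mpr ⟨_, h, by simp [AssertionRNs]⟩

lemma OntologyInLang.alci_of_alc {O : Ontology} (hO : OntologyInLang DL.alc O) :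
    OntologyInLang DL.alci O :=
  fun ci hci => ⟨(hO ci hci).2.1, (hO ci hci).2.2.2⟩

lemma ABoxHom.of_subset {A B : ABox} (h : A ⊆ B) : ABoxHom id A B :=
  ⟨fun _ _ ha => h ha, fun _ _ _ ha => h ha⟩

lemma ABoxHom.iHom_of_satABox {A B : ABox} {h : ℕ → ℕ} (hh : ABoxHom h A B) {I : Interp}
    (hI : I.SatABox B) : ABoxIHom I (I.indI ∘ h) A :=
  ⟨fun P a ha => hI _ (hh.1 P a ha), fun r a b hab => hI _ (hh.2 r a b hab)⟩

namespace Concept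

def bot : Concept := neg top

def disj : List Concept → Concept
  | [] => bot
  | C :: l => neg (inter (neg C) (neg (disj l)))

lemma disj_invFree : ∀ {l : List Concept}, (∀ C ∈ l, C.invFree) → (disj l).invFree
  | [], _ => trivial
  | C :: _, h =>
    ⟨h C (List.mem_cons_self ..), disj_invFree fun D hD => h D (List.mem_cons_of_mem _ hD)⟩

lemma disj_countFree : ∀ {l : List Concept}, (∀ C ∈ l, C.countFree) → (disj l).countFree
  | [], _ => trivial
  | C :: _, h =>
    ⟨h C (List.mem_cons_self ..), disj_countFree fun D hD => h D (List.mem_cons_of_mem _ hD)⟩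

end Concept

namespace Interp

lemma not_mem_cSem_bot (I : Interp) (d : I.Dom) : d ∉ I.cSem Concept.bot :=
  fun h => h trivial

lemma mem_cSem_disj (I : Interp) (d : I.Dom) :
    ∀ l : List Concept, d ∈ I.cSem (Concept.disj l) ↔ ∃ C ∈ l, d ∈ I.cSem C
  | [] => by simpa [Concept.disj] using I.not_mem_cSem_bot d
  | C :: l => by
      simp only [Concept.disj, cSem, Set.mem_compl_iff, Set.mem_inter_iff, mem_cSem_disj I d l,
        List.exists_mem_cons_iff, not_and_or, not_not]

lemma IsModelOf.not_mem_of_bot {I : Interp} {O : Ontology} (hI : I.IsModelOf O) {C : Concept}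
    (hC : (C, Concept.bot) ∈ O) (d : I.Dom) : d ∉ I.cSem C :=
  fun hd => I.not_mem_cSem_bot d (hI _ hC hd)

def comap (I : Interp) {X : Type} (ind : ℕ → X) (hind : Injective ind) (π : X → I.Dom) :
    Interp where
  Dom := X
  indI := ind
  indI_inj := hind
  concI P := π ⁻¹' I.concI P
  roleI r := Prod.map π π ⁻¹' I.roleI r

variable (I : Interp) {X : Type} {ind : ℕ → X} (hind : Injective ind) {π : X → I.Dom}

lemma rSem_comap (r : DLRole) : (I.comap ind hind π).rSem r = Prod.map π π ⁻¹' I.rSem r := by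
  cases r <;> rfl

lemma mem_cSem_comap (hπ : Surjective π) :
    ∀ C : Concept, C.countFree → ∀ x, x ∈ (I.comap ind hind π).cSem C ↔ π x ∈ I.cSem C
  | .top, _, _ => Iff.rfl
  | .atom _, _, _ => Iff.rfl
  | .neg C, hC, x => not_congr (mem_cSem_comap hπ C hC x)
  | .inter C D, hCD, x => and_congr (mem_cSem_comap hπ C hCD.1 x) (mem_cSem_comap hπ D hCD.2 x)
  | .ex r C, hC, x => by
      simp only [cSem, Set.mem_ofPred_eq, rSem_comap, mem_cSem_comap hπ C hC]
      refine ⟨fun ⟨y, hy⟩ => ⟨π y, hy⟩, fun ⟨e, he⟩ => ?_⟩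
      obtain ⟨y, rfl⟩ := hπ e
      exact ⟨y, he⟩
  | .atLeast .., hC, _ | .atMost .., hC, _ => hC.elim

lemma IsModelOf.comap {O : Ontology} (hO : OntologyInLang DL.alci O) (hI : I.IsModelOf O)
    (hπ : Surjective π) : (I.comap ind hind π).IsModelOf O := fun ci hci x hx =>
  (I.mem_cSem_comap hind hπ ci.2 (hO ci hci).2 x).2
    (hI ci hci ((I.mem_cSem_comap hind hπ ci.1 (hO ci hci).1 x).1 hx))

end Interp

lemma consistentWith_of_iHom {O : Ontology} (hO : OntologyInLang DL.alci O) {I : Interp}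
    (hI : I.IsModelOf O) {A : ABox} {f : ℕ → I.Dom} (hf : ABoxIHom I f A) :
    ConsistentWith A O := by
  refine ⟨I.comap Sum.inl Sum.inl_injective (Sum.elim f id),
    Interp.IsModelOf.comap I _ hO hI fun d => ⟨Sum.inr d, rfl⟩, ?_⟩
  rintro (⟨P, a⟩ | ⟨r, a, b⟩) hα
  · exact hf.1 P a hα
  · exact hf.2 r a b hα

namespace Interp

variable {ι : Type} (J : ι → Interp) (pick : ℕ → ι)

lemma mem_disjUnion_rSem {r : DLRole} {x y : Σ i, (J i).Dom} :
    (x, y) ∈ (disjUnion J pick).rSem r ↔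
      ∃ i d e, x = ⟨i, d⟩ ∧ y = ⟨i, e⟩ ∧ (d, e) ∈ (J i).rSem r := by
  cases r with
  | name m =>
      exact ⟨fun ⟨i, d, e, h, hde⟩ => ⟨i, d, e, congrArg Prod.fst h, congrArg Prod.snd h, hde⟩,
        fun ⟨i, d, e, hx, hy, hde⟩ => ⟨i, d, e, hx ▸ hy ▸ rfl, hde⟩⟩
  | inv m =>
      exact ⟨fun ⟨i, d, e, h, hde⟩ => ⟨i, e, d, congrArg Prod.snd h, congrArg Prod.fst h, hde⟩,
        fun ⟨i, d, e, hx, hy, hde⟩ => ⟨i, e, d, hx ▸ hy ▸ rfl, hde⟩⟩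

lemma mem_disjUnion_cSem : ∀ C : Concept, C.countFree → ∀ (i : ι) (d : (J i).Dom),
    (⟨i, d⟩ : (disjUnion J pick).Dom) ∈ (disjUnion J pick).cSem C ↔ d ∈ (J i).cSem C
  | .top, _, _, _ => Iff.rfl
  | .atom _, _, _, _ => Iff.rfl
  | .neg C, hC, i, d => not_congr (mem_disjUnion_cSem C hC i d)
  | .inter C D, hCD, i, d =>
      and_congr (mem_disjUnion_cSem C hCD.1 i d) (mem_disjUnion_cSem D hCD.2 i d)
  | .ex r C, hC, i, d => by
      constructor
      · rintro ⟨y, hy, he⟩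
        obtain ⟨_, _, e, hx, rfl, hde⟩ := (mem_disjUnion_rSem J pick).1 hy
        cases hx
        exact ⟨e, hde, (mem_disjUnion_cSem C hC i e).1 he⟩
      · rintro ⟨e, hde, he⟩
        exact ⟨⟨i, e⟩, (mem_disjUnion_rSem J pick).2 ⟨i, d, e, rfl, rfl, hde⟩,
          (mem_disjUnion_cSem C hC i e).2 he⟩
  | .atLeast .., hC, _, _ | .atMost .., hC, _, _ => hC.elim

lemma IsModelOf.disjUnion {O : Ontology} (hO : OntologyInLang DL.alci O)
    (hJ : ∀ i, (J i).IsModelOf O) : (disjUnion J pick).IsModelOf O := fun ci hci ⟨i, d⟩ hd =>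
  (mem_disjUnion_cSem J pick ci.2 (hO ci hci).2 i d).2
    (hJ i ci hci ((mem_disjUnion_cSem J pick ci.1 (hO ci hci).1 i d).1 hd))

lemma disjUnion_indI_of_pick_eq {i : ι} {a : ℕ} (h : pick a = i) :
    (disjUnion J pick).indI a = ⟨i, (J i).indI a⟩ := by
  subst h; rfl

lemma SatAssertion.disjUnion {i : ι} {α : Assertion} (hα : (J i).SatAssertion α)
    (hpick : ∀ a ∈ AssertionInds α, pick a = i) : (disjUnion J pick).SatAssertion α := by
  cases α with
  | conc P a =>
      rw [SatAssertion, disjUnion_indI_of_pick_eq J pick (hpick a (by simp [AssertionInds]))]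
      exact hα
  | role r a b =>
      rw [SatAssertion, disjUnion_indI_of_pick_eq J pick (hpick a (by simp [AssertionInds])),
        disjUnion_indI_of_pick_eq J pick (hpick b (by simp [AssertionInds]))]
      exact ⟨i, _, _, rfl, hα⟩

end Interp

lemma PairwiseDisjInds.exists_index {S : Finset ABox} (hS : PairwiseDisjInds S)
    (hne : S.Nonempty) : ∃ pick : ℕ → S, ∀ A : S, ∀ a ∈ ABoxInds A, pick a = A := by
  classical
  refine ⟨fun a => if h : ∃ A : S, a ∈ ABoxInds A then h.choose else ⟨_, hne.choose_spec⟩,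
    fun A a ha => ?_⟩
  have h : ∃ A : S, a ∈ ABoxInds A := ⟨A, ha⟩
  dsimp only
  rw [dif_pos h]
  by_contra hne'
  exact Finset.disjoint_left.mp (hS _ h.choose.2 _ A.2 fun heq => hne' (Subtype.ext heq))
    h.choose_spec ha

lemma consistentWith_sup {O : Ontology} (hO : OntologyInLang DL.alci O) {S : Finset ABox}
    (hS : PairwiseDisjInds S) (hne : S.Nonempty) (hcons : ∀ A ∈ S, ConsistentWith A O) :
    ConsistentWith (S.sup id) O := by
  choose J hJO hJA using hcons
  obtain ⟨pick, hpick⟩ := hS.exists_index hne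
  refine ⟨Interp.disjUnion (fun A : S => J A A.2) pick,
    Interp.IsModelOf.disjUnion _ pick hO fun A => hJO A A.2, fun α hα => ?_⟩
  obtain ⟨A, hA, hαA⟩ := Finset.mem_sup.mp hα
  exact (hJA A hA α hαA).disjUnion _ pick (i := ⟨A, hA⟩)
    fun a ha => hpick ⟨A, hA⟩ a (Finset.mem_biUnion.mpr ⟨α, hαA, ha⟩)

lemma not_consistentWith_top_bot (A : ABox) :
    ¬ ConsistentWith A {(Concept.top, Concept.bot)} := fun ⟨I, hI, _⟩ =>
  hI.not_mem_of_bot (Finset.mem_singleton_self _) (I.indI 0) trivial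

section CharOntology

variable (B : ABox) (CNs RNs : Finset ℕ) (N : ℕ)

/-- The colour `X_b`; the concept names below `N` are those of the signature. -/
def colour (N b : ℕ) : Concept := .atom (N + b)

/-- `0` is added so that there is a colour even when `B` has no individuals. -/
def colours : Finset ℕ := insert 0 (ABoxInds B)

noncomputable def charOntology : Ontology :=
  insert (Concept.top, Concept.disj ((colours B).toList.map (colour N)))
    ((((colours B ×ˢ CNs).filter fun p => Assertion.conc p.2 p.1 ∉ B).image fun p =>
        (Concept.inter (colour N p.1) (Concept.atom p.2), Concept.bot)) ∪
      (((colours B ×ˢ colours B ×ˢ RNs).filter fun p => Assertion.role p.2.2 p.1 p.2.1 ∉ B).image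
        fun p => (Concept.inter (colour N p.1) (Concept.ex (.name p.2.2) (colour N p.2.1)),
          Concept.bot)))

lemma mem_charOntology {ci : Concept × Concept} : ci ∈ charOntology B CNs RNs N ↔
    ci = (Concept.top, Concept.disj ((colours B).toList.map (colour N))) ∨
    (∃ b ∈ colours B, ∃ P ∈ CNs, Assertion.conc P b ∉ B ∧
      ci = (Concept.inter (colour N b) (Concept.atom P), Concept.bot)) ∨
    (∃ b ∈ colours B, ∃ b' ∈ colours B, ∃ r ∈ RNs, Assertion.role r b b' ∉ B ∧
      ci = (Concept.inter (colour N b) (Concept.ex (.name r) (colour N b')), Concept.bot)) := by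
  simp only [charOntology, Finset.mem_insert, Finset.mem_union, Finset.mem_image,
    Finset.mem_filter, Finset.mem_product, Prod.exists]
  aesop

lemma charOntology_alc : OntologyInLang DL.alc (charOntology B CNs RNs N) := by
  intro ci hci
  rcases (mem_charOntology B CNs RNs N).1 hci with rfl | ⟨b, -, P, -, -, rfl⟩ |
    ⟨b, -, b', -, r, -, -, rfl⟩
  · refine ⟨trivial, trivial, Concept.disj_invFree ?_, Concept.disj_countFree ?_⟩ <;>
      simp [colour, Concept.invFree, Concept.countFree]
  · exact ⟨⟨trivial, trivial⟩, ⟨trivial, trivial⟩, trivial, trivial⟩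
  · exact ⟨⟨trivial, ⟨r, rfl⟩, trivial⟩, ⟨trivial, trivial⟩, trivial, trivial⟩

/-- The model of `A` in which every individual `a` has the colour `h a`. -/
def colouredModel (A : ABox) (h : ℕ → ℕ) (N : ℕ) : Interp where
  Dom := ℕ
  indI := id
  indI_inj := injective_id
  concI P := {a | Assertion.conc P a ∈ A ∨ N + h a = P}
  roleI r := {p | Assertion.role r p.1 p.2 ∈ A}

variable {A : ABox} {h : ℕ → ℕ} {N}

lemma colouredModel_mem_colour (hA : ∀ P ∈ ABoxCNs A, P < N) {a b : ℕ} :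
    a ∈ (colouredModel A h N).cSem (colour N b) ↔ h a = b := by
  have : Assertion.conc (N + b) a ∉ A := fun hc => by
    have := hA _ (mem_ABoxCNs_of_conc hc); omega
  change Assertion.conc (N + b) a ∈ A ∨ N + h a = N + b ↔ _
  simp only [this, false_or, Nat.add_left_cancel_iff]

lemma colouredModel_mem_atom {P a : ℕ} (hP : P < N) :
    a ∈ (colouredModel A h N).cSem (.atom P) ↔ Assertion.conc P a ∈ A :=
  or_iff_left (by omega)

lemma ABoxHom.exists_forall_mem_colours (hh : ABoxHom h A B) :
    ∃ h' : ℕ → ℕ, ABoxHom h' A B ∧ ∀ a, h' a ∈ colours B := by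
  classical
  refine ⟨fun a => if h a ∈ ABoxInds B then h a else 0, ⟨fun P a ha => ?_, fun r a b hab => ?_⟩,
    fun a => ?_⟩
  · have := hh.1 P a ha
    dsimp only
    rwa [if_pos (mem_ABoxInds_of_conc this)]
  · have := hh.2 r a b hab
    dsimp only
    rwa [if_pos (mem_ABoxInds_of_role_left this), if_pos (mem_ABoxInds_of_role_right this)]
  · dsimp only
    split_ifs with ha
    exacts [Finset.mem_insert_of_mem ha, Finset.mem_insert_self _ _]

lemma consistentWith_charOntology_of_hom (hCN : ∀ P ∈ CNs, P < N)
    (hA : ∀ P ∈ ABoxCNs A, P < N) (hh : ABoxHom h A B) (hcol : ∀ a, h a ∈ colours B) :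
    ConsistentWith A (charOntology B CNs RNs N) := by
  refine ⟨colouredModel A h N, fun ci hci => ?_, ?_⟩
  · rcases (mem_charOntology B CNs RNs N).1 hci with rfl | ⟨b, -, P, hP, hPb, rfl⟩ |
      ⟨b, -, b', -, r, -, hrb, rfl⟩
    · intro a _
      exact (Interp.mem_cSem_disj _ _ _).2 ⟨_, List.mem_map_of_mem (Finset.mem_toList.2 (hcol a)),
        (colouredModel_mem_colour hA).2 rfl⟩
    · rintro a ⟨hab, haP⟩
      obtain rfl := (colouredModel_mem_colour hA).1 hab
      exact (hPb (hh.1 P a ((colouredModel_mem_atom (hCN P hP)).1 haP))).elim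
    · rintro a ⟨hab, c, hac, hcb⟩
      obtain rfl := (colouredModel_mem_colour hA).1 hab
      obtain rfl := (colouredModel_mem_colour hA).1 hcb
      exact (hrb (hh.2 r a c hac)).elim
  · rintro (⟨P, a⟩ | ⟨r, a, b⟩) hα
    exacts [Or.inl hα, hα]

lemma exists_hom_of_consistentWith_charOntology (hACN : ABoxCNs A ⊆ CNs)
    (hARN : ABoxRNs A ⊆ RNs) (hcons : ConsistentWith A (charOntology B CNs RNs N)) :
    ∃ h : ℕ → ℕ, ABoxHom h A B := by
  obtain ⟨I, hIO, hIA⟩ := hcons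
  have hcover : ∀ a, ∃ b ∈ colours B, I.indI a ∈ I.cSem (colour N b) := fun a => by
    obtain ⟨C, hC, haC⟩ := (I.mem_cSem_disj _ _).1
      (hIO _ ((mem_charOntology B CNs RNs N).2 (Or.inl rfl)) (Set.mem_univ (I.indI a)))
    obtain ⟨b, hb, rfl⟩ := List.mem_map.1 hC
    exact ⟨b, Finset.mem_toList.1 hb, haC⟩
  choose h hhB hh using hcover
  refine ⟨h, fun P a ha => ?_, fun r a b hab => ?_⟩
  · by_contra hPB
    exact hIO.not_mem_of_bot ((mem_charOntology B CNs RNs N).2 (Or.inr (Or.inl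
      ⟨_, hhB a, P, hACN (mem_ABoxCNs_of_conc ha), hPB, rfl⟩))) _ ⟨hh a, hIA _ ha⟩
  · by_contra hrB
    exact hIO.not_mem_of_bot ((mem_charOntology B CNs RNs N).2 (Or.inr (Or.inr
      ⟨_, hhB a, _, hhB b, r, hARN (mem_ABoxRNs_of_role hab), hrB, rfl⟩))) _
      ⟨hh a, _, hIA _ hab, hh b⟩

lemma consistentWith_charOntology_iff (hCN : ∀ P ∈ CNs, P < N) (hACN : ABoxCNs A ⊆ CNs)
    (hARN : ABoxRNs A ⊆ RNs) :
    ConsistentWith A (charOntology B CNs RNs N) ↔ ∃ h : ℕ → ℕ, ABoxHom h A B := by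
  refine ⟨exists_hom_of_consistentWith_charOntology B CNs RNs hACN hARN, fun ⟨h, hh⟩ => ?_⟩
  obtain ⟨h', hh', hcol⟩ := ABoxHom.exists_forall_mem_colours B hh
  exact consistentWith_charOntology_of_hom B CNs RNs hCN (fun P hP => hCN P (hACN hP)) hh' hcol

end CharOntology

/-- A collection of labeled ABox examples admits a fitting
ALC-ontology if and only if it admits a fitting ALCI-ontology. -/
theorem consistency_fitting_alc_iff_alci (Ep En : Finset ABox)
    (hdisj : PairwiseDisjInds (Ep ∪ En)) :
    (∃ O : Ontology, OntologyInLang DL.alc O ∧ FitsCons O Ep En) ↔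
      (∃ O : Ontology, OntologyInLang DL.alci O ∧ FitsCons O Ep En) := by
  refine ⟨fun ⟨O, hO, hfit⟩ => ⟨O, hO.alci_of_alc, hfit⟩, fun ⟨O, hO, hpos, hneg⟩ => ?_⟩
  rcases Ep.eq_empty_or_nonempty with rfl | hEp
  · refine ⟨{(Concept.top, Concept.bot)}, ?_, by simp, fun A _ => not_consistentWith_top_bot A⟩
    simp [OntologyInLang, Concept.invFree, Concept.countFree, Concept.bot]
  set B := Ep.sup id
  obtain ⟨I, hIO, hIB⟩ : ConsistentWith B O := consistentWith_sup hO
    (fun A hA A' hA' => hdisj A (Finset.mem_union_left _ hA) A' (Finset.mem_union_left _ hA'))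
    hEp hpos
  set CNs := (Ep ∪ En).sup ABoxCNs
  set RNs := (Ep ∪ En).sup ABoxRNs
  set N := CNs.sup id + 1
  have hsig : ∀ {A}, A ∈ Ep ∪ En →
      (ConsistentWith A (charOntology B CNs RNs N) ↔ ∃ h : ℕ → ℕ, ABoxHom h A B) := fun hA =>
    consistentWith_charOntology_iff _ _ _
      (fun P hP => Nat.lt_succ_of_le (Finset.le_sup (f := id) hP))
      (Finset.le_sup (f := ABoxCNs) hA) (Finset.le_sup (f := ABoxRNs) hA)
  refine ⟨_, charOntology_alc B CNs RNs N, fun A hA => ?_, fun A hA hcons => ?_⟩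
  · exact (hsig (Finset.mem_union_left _ hA)).2
      ⟨id, ABoxHom.of_subset (Finset.le_sup (f := id) hA)⟩
  · obtain ⟨h, hh⟩ := (hsig (Finset.mem_union_right _ hA)).1 hcons
    exact hneg A hA (consistentWith_of_iHom hO hIO (hh.iHom_of_satABox hIB))

end DLFit
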